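/- Let i ≥ 1, l ≥ 0, and let N_i be the number of monic irreducible polynomials of degree i over F_q. If m ≥ i(N_i + l) + w and a_1, ..., a_w ∈ F_q are fixed, then the number of monic polynomials x^m + a_1 x^{m-1} + ... + a_w x^{m-w} + g(x), deg g ≤ m−w−1, having exactly l irreducible factors of degree i counted with multiplicity, equals q^{m-w} · C(N_i + l − 1, l) · (1/q^i)^l · (1 − 1/q^i)^{N_i}. -/

import Mathlib

/-!
Over a finite field with `q` elements, fix the top `w` coefficients of a monic polynomial of
degree `m` and a monic `d` with `deg d + w ≤ m`. If `g₀` is one admissible multiple of `d`, the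
admissible multiples of `d` are exactly the `g₀ + d t` with `deg t < m - w - deg d`, so there are
`q ^ (m - w - deg d)` of them. Prescribing the exact multiplicity `e h` of one monic irreducible `h`
is the difference of the conditions `h ^ e h ∣ g` and `h ^ (e h + 1) ∣ g`; peeling off the degree-`i`
irreducibles one at a time (they are pairwise coprime) gives
`q ^ (m - w - i l) (1 - q ^ (-i)) ^ N_i` admissible `g` for each exponent vector `e` with
`∑ e h = l`; the hypothesis `m ≥ i (N_i + l) + w` guarantees that every divisor occurring has
degree at most `m - w`. Finally, the exponent vectors are counted by stars and bars.
-/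

open Polynomial UniqueFactorizationMonoid

theorem Set.ncard_eq_sum_ncard_fiberwise {α β : Type*} [DecidableEq β] {s : Set α}
    (hs : s.Finite) {f : α → β} {t : Finset β} (H : ∀ x ∈ s, f x ∈ t) :
    s.ncard = ∑ b ∈ t, {x | x ∈ s ∧ f x = b}.ncard := by
  rw [Set.ncard_eq_toFinset_card s hs,
    Finset.card_eq_sum_card_fiberwise fun x hx => H x (hs.mem_toFinset.1 hx)]
  refine Finset.sum_congr rfl fun b _ => ?_
  rw [Set.ncard_eq_toFinset_card _ (hs.subset fun x hx => hx.1)]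
  congr 1
  ext
  simp

namespace Multiset

variable {α : Type*} [DecidableEq α]

theorem toFinsupp_filter_mem_mem_finsuppAntidiag_iff {s : Multiset α} {I : Finset α} {n : ℕ} :
    (s.filter (· ∈ I)).toFinsupp ∈ I.finsuppAntidiag n ↔ s.countP (· ∈ I) = n := by
  have hsum : I.sum (s.filter (· ∈ I)).toFinsupp = s.countP (· ∈ I) := by
    rw [countP_eq_card_filter, ← sum_count_eq_card fun a ha => (mem_filter.1 ha).2]
    exact Finset.sum_congr rfl fun a _ => toFinsupp_apply _ _
  rw [Finset.mem_finsuppAntidiag, hsum, toFinsupp_support, and_iff_left]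
  exact fun a ha => (mem_filter.1 (mem_toFinset.1 ha)).2

theorem toFinsupp_filter_mem_eq_iff {s : Multiset α} {I : Finset α} {f : α →₀ ℕ}
    (hf : f.support ⊆ I) : (s.filter (· ∈ I)).toFinsupp = f ↔ ∀ a ∈ I, s.count a = f a := by
  simp only [Finsupp.ext_iff, toFinsupp_apply, count_filter]
  refine forall_congr' fun a => ?_
  by_cases ha : a ∈ I
  · simp [ha]
  · simp [ha, Finsupp.notMem_support_iff.1 fun h => ha (hf h)]

end Multiset

theorem Set.ncard_countP_mem_eq_sum {α β : Type*} [DecidableEq α] {s : Set β} (hs : s.Finite)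
    (φ : β → Multiset α) (I : Finset α) (n : ℕ) :
    {x | x ∈ s ∧ (φ x).countP (· ∈ I) = n}.ncard =
      ∑ f ∈ I.finsuppAntidiag n, {x | x ∈ s ∧ ∀ a ∈ I, (φ x).count a = f a}.ncard := by
  rw [Set.ncard_eq_sum_ncard_fiberwise (hs.subset fun x hx => hx.1)
    (f := fun x => ((φ x).filter (· ∈ I)).toFinsupp)
    fun x hx => Multiset.toFinsupp_filter_mem_mem_finsuppAntidiag_iff.2 hx.2]
  refine Finset.sum_congr rfl fun f hf => congrArg Set.ncard (Set.ext fun x => ?_)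
  simp only [Set.mem_ofPred_eq,
    ← Multiset.toFinsupp_filter_mem_eq_iff (Finset.mem_finsuppAntidiag.1 hf).2]
  constructor
  · rintro ⟨⟨hx, -⟩, hfx⟩
    exact ⟨hx, hfx⟩
  · rintro ⟨hx, hfx⟩
    exact ⟨⟨hx, Multiset.toFinsupp_filter_mem_mem_finsuppAntidiag_iff.1 (hfx ▸ hf)⟩, hfx⟩

namespace UniqueFactorizationMonoid

theorem pow_dvd_iff_le_count_normalizedFactors {R : Type*} [CommMonoidWithZero R]
    [UniqueFactorizationMonoid R] [NormalizationMonoid R] [DecidableEq R] {p x : R}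
    (hp : Irreducible p) (hnorm : normalize p = p) (hx : x ≠ 0) {n : ℕ} :
    p ^ n ∣ x ↔ n ≤ (normalizedFactors x).count p := by
  rw [pow_dvd_iff_le_emultiplicity, le_emultiplicity_iff_replicate_le_normalizedFactors hp hx,
    hnorm, Multiset.le_count_iff_replicate_le]

/-- Exact multiplicity `e p` of `p` is "`p ^ e p` divides" minus "`p ^ (e p + 1)` divides". -/
theorem ncard_dvd_count_normalizedFactors_insert {R : Type*} [CommRing R] [IsDomain R]
    [UniqueFactorizationMonoid R] [NormalizationMonoid R] [DecidableEq R] {s : Set R}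
    (hs : s.Finite) (hs₀ : ∀ x ∈ s, x ≠ 0) {d p : R} (hp : Irreducible p) (hnorm : normalize p = p)
    (hdp : IsCoprime d p) (T : Finset R) (e : R → ℕ) :
    {x | x ∈ s ∧ d ∣ x ∧ ∀ h ∈ insert p T, (normalizedFactors x).count h = e h}.ncard +
        {x | x ∈ s ∧ d * p ^ (e p + 1) ∣ x ∧ ∀ h ∈ T, (normalizedFactors x).count h = e h}.ncard =
      {x | x ∈ s ∧ d * p ^ e p ∣ x ∧ ∀ h ∈ T, (normalizedFactors x).count h = e h}.ncard := by
  set S : ℕ → Set R := fun f => {x | x ∈ s ∧ d * p ^ f ∣ x ∧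
    ∀ h ∈ T, (normalizedFactors x).count h = e h} with hS
  have hdvd (x : R) (hx : x ∈ s) (f : ℕ) :
      d * p ^ f ∣ x ↔ d ∣ x ∧ f ≤ (normalizedFactors x).count p := by
    rw [← pow_dvd_iff_le_count_normalizedFactors hp hnorm (hs₀ x hx)]
    exact ⟨fun h => ⟨dvd_of_mul_right_dvd h, dvd_of_mul_left_dvd h⟩,
      fun ⟨h₁, h₂⟩ => hdp.pow_right.mul_dvd h₁ h₂⟩
  have hsplit : {x | x ∈ s ∧ d ∣ x ∧ ∀ h ∈ insert p T, (normalizedFactors x).count h = e h} =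
      S (e p) \ S (e p + 1) := by
    ext x
    by_cases hx : x ∈ s
    · have hc (c : ℕ) : c = e p ↔ e p ≤ c ∧ ¬ e p + 1 ≤ c := by omega
      simp only [hS, Finset.forall_mem_insert, Set.mem_sdiff, Set.mem_ofPred_eq, hdvd x hx, hc]
      tauto
    · simp [hS, hx]
  have hsub : S (e p + 1) ⊆ S (e p) := fun x ⟨hx, hdx, hxT⟩ =>
    ⟨hx, (mul_dvd_mul_left d (pow_dvd_pow p (Nat.le_succ _))).trans hdx, hxT⟩
  rw [hsplit]
  exact Set.ncard_sdiff_add_ncard_of_subset hsub (hs.subset fun x hx => hx.1)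

end UniqueFactorizationMonoid

namespace Polynomial

variable {R : Type*}

theorem natCard_degreeLT [CommRing R] (n : ℕ) : Nat.card (degreeLT R n) = Nat.card R ^ n := by
  rw [Nat.card_congr (degreeLTEquiv R n).toEquiv, Nat.card_fun, Nat.card_fin]

theorem finite_setOf_natDegree_le [CommRing R] [Finite R] (n : ℕ) :
    {p : R[X] | p.natDegree ≤ n}.Finite := by
  have : Finite (degreeLT R (n + 1)) := .of_equiv _ (degreeLTEquiv R (n + 1)).toEquiv.symm
  refine (degreeLT R (n + 1) : Set R[X]).toFinite.subset fun p hp => ?_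
  rw [SetLike.mem_coe, mem_degreeLT]
  exact (degree_le_natDegree.trans (WithBot.coe_le_coe.2 hp)).trans_lt
    (WithBot.coe_lt_coe.2 n.lt_succ_self)

theorem Monic.degree_mul_lt_iff [CommRing R] [Nontrivial R] {d t : R[X]} (hd : d.Monic) {n : ℕ}
    (hn : d.natDegree ≤ n) : (d * t).degree < n ↔ t.degree < ↑(n - d.natDegree) := by
  rcases eq_or_ne t 0 with rfl | ht
  · simp
  rw [degree_eq_natDegree (hd.mul_right_ne_zero ht), degree_eq_natDegree ht,
    hd.natDegree_mul' ht, Nat.cast_lt, Nat.cast_lt]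
  omega

def monicWithTopCoeffs [Semiring R] {w : ℕ} (m : ℕ) (a : Fin w → R) : Set R[X] :=
  {g | g.Monic ∧ g.natDegree = m ∧ ∀ k : Fin w, g.coeff (m - (k + 1)) = a k}

section monicWithTopCoeffs

variable {w m : ℕ} {a : Fin w → R}

theorem finite_monicWithTopCoeffs [CommRing R] [Finite R] : (monicWithTopCoeffs m a).Finite :=
  (finite_setOf_natDegree_le m).subset fun _ hg => hg.2.1.le

theorem coeff_eq_of_mem_monicWithTopCoeffs [Semiring R] {g g₀ : R[X]}
    (hg : g ∈ monicWithTopCoeffs m a) (hg₀ : g₀ ∈ monicWithTopCoeffs m a) {j : ℕ}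
    (hj : m - w ≤ j) : g.coeff j = g₀.coeff j := by
  obtain ⟨hmon, hdeg, hcoeff⟩ := hg
  obtain ⟨hmon₀, hdeg₀, hcoeff₀⟩ := hg₀
  rcases lt_trichotomy j m with hjm | rfl | hjm
  · obtain ⟨k, rfl⟩ : ∃ k : Fin w, j = m - (k + 1) := ⟨⟨m - 1 - j, by omega⟩, by simp; omega⟩
    rw [hcoeff, hcoeff₀]
  · rw [← hdeg, hmon.coeff_natDegree, hdeg, ← hdeg₀, hmon₀.coeff_natDegree]
  · rw [coeff_eq_zero_of_natDegree_lt (hdeg ▸ hjm), coeff_eq_zero_of_natDegree_lt (hdeg₀ ▸ hjm)]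

theorem mem_monicWithTopCoeffs_of_coeff_eq [Semiring R] [Nontrivial R] {g g₀ : R[X]}
    (hg₀ : g₀ ∈ monicWithTopCoeffs m a) (h : ∀ j, m - w ≤ j → g.coeff j = g₀.coeff j) :
    g ∈ monicWithTopCoeffs m a := by
  obtain ⟨hmon₀, hdeg₀, hcoeff₀⟩ := hg₀
  have hm : g.coeff m = 1 := by rw [h m (Nat.sub_le m w), ← hdeg₀, hmon₀.coeff_natDegree]
  have hdeg : g.natDegree = m := by
    refine natDegree_eq_of_le_of_coeff_ne_zero (natDegree_le_iff_coeff_eq_zero.2 fun j hj => ?_)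
      (by simp [hm])
    rw [h j (by omega), coeff_eq_zero_of_natDegree_lt (by omega)]
  refine ⟨by rw [Monic, leadingCoeff, hdeg, hm], hdeg, fun k => ?_⟩
  rw [h _ (by omega), hcoeff₀]

theorem mem_monicWithTopCoeffs_iff_sub_mem_degreeLT [Ring R] [Nontrivial R] {g g₀ : R[X]}
    (hg₀ : g₀ ∈ monicWithTopCoeffs m a) :
    g ∈ monicWithTopCoeffs m a ↔ g - g₀ ∈ degreeLT R (m - w) := by
  simp only [mem_degreeLT, degree_lt_iff_coeff_zero, coeff_sub, sub_eq_zero]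
  exact ⟨fun hg _ => coeff_eq_of_mem_monicWithTopCoeffs hg hg₀,
    mem_monicWithTopCoeffs_of_coeff_eq hg₀⟩

theorem nonempty_monicWithTopCoeffs [Semiring R] [Nontrivial R] (hw : w ≤ m) :
    (monicWithTopCoeffs m a).Nonempty := by
  set r := ∑ k : Fin w, C (a k) * X ^ (m - (k + 1))
  have hr : r.degree < m := by
    refine (degree_sum_le _ _).trans_lt ((Finset.sup_lt_iff (by simp)).2 fun k _ => ?_)
    exact (degree_C_mul_X_pow_le _ _).trans_lt (by have := k.isLt; norm_cast; omega)
  refine ⟨X ^ m + r, monic_X_pow_add hr,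
    (natDegree_add_eq_left_of_degree_lt (by rwa [degree_X_pow])).trans (natDegree_X_pow m),
    fun k => ?_⟩
  rw [coeff_add, coeff_X_pow, if_neg (by omega), zero_add, finsetSum_coeff,
    Finset.sum_eq_single k]
  · simp
  · intro k' _ hk'
    rw [coeff_C_mul_X_pow, if_neg (fun h => hk' (Fin.ext (by omega)))]
  · simp

theorem exists_dvd_mem_monicWithTopCoeffs [CommRing R] [Nontrivial R] {d : R[X]} (hd : d.Monic)
    (hdm : w + d.natDegree ≤ m) : ∃ g ∈ monicWithTopCoeffs m a, d ∣ g := by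
  obtain ⟨P, hP⟩ := nonempty_monicWithTopCoeffs (a := a) (by omega : w ≤ m)
  refine ⟨P - P %ₘ d, (mem_monicWithTopCoeffs_iff_sub_mem_degreeLT hP).2 ?_,
    ⟨P /ₘ d, sub_eq_iff_eq_add'.2 (modByMonic_add_div P d).symm⟩⟩
  rw [sub_sub_cancel_left, neg_mem_iff, mem_degreeLT]
  refine (degree_modByMonic_lt P hd).trans_le ?_
  rw [degree_eq_natDegree hd.ne_zero]
  exact_mod_cast (by omega : d.natDegree ≤ m - w)

theorem ncard_dvd_monicWithTopCoeffs [CommRing R] [Nontrivial R] {d : R[X]} (hd : d.Monic)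
    (hdm : w + d.natDegree ≤ m) :
    {g | g ∈ monicWithTopCoeffs m a ∧ d ∣ g}.ncard = Nat.card R ^ (m - w - d.natDegree) := by
  obtain ⟨g₀, hg₀, hdg₀⟩ := exists_dvd_mem_monicWithTopCoeffs (a := a) hd hdm
  have hdeg (t : R[X]) := hd.degree_mul_lt_iff (t := t) (by omega : d.natDegree ≤ m - w)
  have : {g | g ∈ monicWithTopCoeffs m a ∧ d ∣ g} =
      (fun t => g₀ + d * t) '' (degreeLT R (m - w - d.natDegree)) := by
    ext g
    constructor
    · rintro ⟨hg, hdg⟩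
      obtain ⟨t, ht⟩ := dvd_sub hdg hdg₀
      have hmem := (mem_monicWithTopCoeffs_iff_sub_mem_degreeLT hg₀).1 hg
      rw [ht, mem_degreeLT, hdeg] at hmem
      exact ⟨t, mem_degreeLT.2 hmem, by simp only [← ht, add_sub_cancel]⟩
    · rintro ⟨t, ht, rfl⟩
      refine ⟨(mem_monicWithTopCoeffs_iff_sub_mem_degreeLT hg₀).2 ?_,
        dvd_add hdg₀ (dvd_mul_right d t)⟩
      rw [add_sub_cancel_left, mem_degreeLT, hdeg]
      exact mem_degreeLT.1 ht
  rw [this, Set.ncard_image_of_injective _ fun t t' h => hd.isRegular.left (add_left_cancel h),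
    ← Nat.card_coe_set_eq, SetLike.coe_sort_coe, natCard_degreeLT]

end monicWithTopCoeffs

variable {K : Type*} [Field K]

theorem isCoprime_of_monic_of_irreducible_of_ne {p q : K[X]} (hp : p.Monic) (hq : q.Monic)
    (hpi : Irreducible p) (hqi : Irreducible q) (hne : p ≠ q) : IsCoprime p q :=
  hpi.coprime_iff_not_dvd.2 fun hdvd =>
    hne (eq_of_monic_of_associated hp hq (hpi.associated_of_dvd hqi hdvd))

variable [Finite K] [DecidableEq K] {w m : ℕ} {a : Fin w → K}

theorem ncard_count_normalizedFactors_eq (T : Finset K[X]) (hT : ∀ h ∈ T, h.Monic ∧ Irreducible h)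
    (e : K[X] → ℕ) {d : K[X]} (hd : d.Monic) (hdT : ∀ h ∈ T, IsCoprime d h)
    (hm : w + d.natDegree + ∑ h ∈ T, (e h + 1) * h.natDegree ≤ m) :
    ({g | g ∈ monicWithTopCoeffs m a ∧ d ∣ g ∧
        ∀ h ∈ T, (normalizedFactors g).count h = e h}.ncard : ℚ) =
      (Nat.card K : ℚ) ^ (m - w - (d.natDegree + ∑ h ∈ T, e h * h.natDegree)) *
        ∏ h ∈ T, (1 - 1 / (Nat.card K : ℚ) ^ h.natDegree) := by
  induction T using Finset.induction_on generalizing d with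
  | empty =>
    simp only [Finset.notMem_empty, IsEmpty.forall_iff, implies_true, and_true,
      Finset.sum_empty, add_zero, Finset.prod_empty, mul_one] at hm ⊢
    rw [ncard_dvd_monicWithTopCoeffs hd hm, Nat.cast_pow]
  | insert h₀ T h₀T ih =>
    rw [Finset.forall_mem_insert] at hT hdT
    obtain ⟨⟨hmon₀, hirr₀⟩, hT⟩ := hT
    obtain ⟨hdh₀, hdT⟩ := hdT
    rw [Finset.sum_insert h₀T] at hm ⊢
    rw [Finset.prod_insert h₀T]
    set q : ℚ := (Nat.card K : ℚ)
    set δ := h₀.natDegree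
    have hsplit := congrArg (Nat.cast : ℕ → ℚ) <| ncard_dvd_count_normalizedFactors_insert
      (s := monicWithTopCoeffs m a) finite_monicWithTopCoeffs (fun g hg => hg.1.ne_zero) hirr₀
      hmon₀.normalize_eq_self hdh₀ T e
    rw [Nat.cast_add] at hsplit
    have hcard (f : ℕ) (hf : f ≤ e h₀ + 1) :
        ({g | g ∈ monicWithTopCoeffs m a ∧ d * h₀ ^ f ∣ g ∧
          ∀ h ∈ T, (normalizedFactors g).count h = e h}.ncard : ℚ) =
        q ^ (m - w - (d.natDegree + f * δ + ∑ h ∈ T, e h * h.natDegree)) *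
          ∏ h ∈ T, (1 - 1 / q ^ h.natDegree) := by
      have hcop (h : K[X]) (hh : h ∈ T) : IsCoprime (d * h₀ ^ f) h :=
        (hdT h hh).mul_left (isCoprime_of_monic_of_irreducible_of_ne hmon₀ (hT h hh).1 hirr₀
          (hT h hh).2 (ne_of_mem_of_not_mem hh h₀T).symm).pow_left
      have hdeg : (d * h₀ ^ f).natDegree = d.natDegree + f * δ := by
        rw [hd.natDegree_mul (hmon₀.pow f), hmon₀.natDegree_pow]
      have := Nat.mul_le_mul_right δ hf
      rw [ih hT (hd.mul (hmon₀.pow f)) hcop (by omega), hdeg]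
    have hle : ∑ h ∈ T, e h * h.natDegree ≤ ∑ h ∈ T, (e h + 1) * h.natDegree :=
      Finset.sum_le_sum fun h _ => Nat.mul_le_mul_right _ (Nat.le_succ _)
    have hexp : m - w - (d.natDegree + (e h₀ + 1) * δ + ∑ h ∈ T, e h * h.natDegree) + δ =
        m - w - (d.natDegree + e h₀ * δ + ∑ h ∈ T, e h * h.natDegree) := by
      rw [add_mul, one_mul] at hm ⊢; omega
    have hq : q ≠ 0 := Nat.cast_ne_zero.2 Nat.card_pos.ne'
    rw [eq_sub_of_add_eq hsplit, hcard _ le_rfl,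
      hcard _ (Nat.le_succ _), ← add_assoc, ← hexp, pow_add]
    field_simp

theorem ncard_count_normalizedFactors_eq_of_mem_finsuppAntidiag {i l : ℕ} {I : Finset K[X]}
    (hI : ∀ h ∈ I, h.Monic ∧ Irreducible h ∧ h.natDegree = i) {f : K[X] →₀ ℕ}
    (hf : f ∈ I.finsuppAntidiag l) (hm : i * (I.card + l) + w ≤ m) :
    ({g | g ∈ monicWithTopCoeffs m a ∧ ∀ h ∈ I, (normalizedFactors g).count h = f h}.ncard : ℚ) =
      (Nat.card K : ℚ) ^ (m - w - i * l) * (1 - 1 / (Nat.card K : ℚ) ^ i) ^ I.card := by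
  have hsum : ∑ h ∈ I, f h * h.natDegree = i * l := by
    rw [Finset.sum_congr rfl fun h hh => by rw [(hI h hh).2.2], ← Finset.sum_mul,
      (Finset.mem_finsuppAntidiag.1 hf).1, mul_comm]
  have hsum' : ∑ h ∈ I, (f h + 1) * h.natDegree = i * (I.card + l) := by
    simp only [add_mul, one_mul, Finset.sum_add_distrib, hsum,
      Finset.sum_congr rfl fun h hh => (hI h hh).2.2, Finset.sum_const, smul_eq_mul]
    ring
  have := ncard_count_normalizedFactors_eq (m := m) (a := a) I
    (fun h hh => ⟨(hI h hh).1, (hI h hh).2.1⟩) f monic_one (fun _ _ => isCoprime_one_left)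
    (by rw [hsum', natDegree_one]; omega)
  simp only [one_dvd, true_and, natDegree_one, zero_add, hsum] at this
  rw [this, Finset.prod_congr rfl fun h hh => by rw [(hI h hh).2.2], Finset.prod_const]

end Polynomial

theorem stmt_12_general (q : ℕ) (F : Type*) [Field F] [Fintype F] [DecidableEq F] (hF : Fintype.card F = q)
    (i : ℕ) (Ni : ℕ)
    (hNi : Ni = Nat.card {h : Polynomial F // h.Monic ∧ Irreducible h ∧ h.natDegree = i})
    (w m l : ℕ) (hm : i * (Ni + l) + w ≤ m) (a : Fin w → F) :
    (Nat.card {g : Polynomial F // g.Monic ∧ g.natDegree = m ∧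
        (∀ k : Fin w, g.coeff (m - (k + 1)) = a k) ∧
        Multiset.countP (fun h => h.natDegree = i) (normalizedFactors g) = l} : ℚ) =
      (q : ℚ) ^ (m - w) * ((Ni + l - 1).choose l) * (1 / (q : ℚ) ^ i) ^ l *
        (1 - 1 / (q : ℚ) ^ i) ^ Ni := by
  obtain ⟨I, hI⟩ : ∃ I : Finset F[X], ∀ h, h ∈ I ↔ h.Monic ∧ Irreducible h ∧ h.natDegree = i :=
    ⟨((finite_setOf_natDegree_le i).subset (t := {h | h.Monic ∧ Irreducible h ∧ h.natDegree = i})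
      fun h hh => hh.2.2.le).toFinset, fun h => by simp⟩
  have hNI : Ni = I.card :=
    hNi.trans ((Nat.card_congr (Equiv.subtypeEquivRight fun h => (hI h).symm)).trans
      (Nat.card_eq_finsetCard I))
  have hq : (q : ℚ) ≠ 0 := by rw [← hF]; exact_mod_cast Fintype.card_ne_zero
  have hfactors (g : F[X]) (hg : g ≠ 0) : (normalizedFactors g).countP (·.natDegree = i) =
      (normalizedFactors g).countP (· ∈ I) :=
    Multiset.countP_congr rfl fun x hx => by
      obtain ⟨hirr, hmon, -⟩ := (Polynomial.mem_normalizedFactors_iff hg).1 hx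
      simp [hI, hirr, hmon]
  rw [Nat.card_congr (Equiv.subtypeEquivRight (q := (· ∈ {g | g ∈ monicWithTopCoeffs m a ∧
      (normalizedFactors g).countP (· ∈ I) = l})) fun g => ?_), Nat.card_coe_set_eq,
    Set.ncard_countP_mem_eq_sum finite_monicWithTopCoeffs, Nat.cast_sum,
    Finset.sum_congr rfl fun f hf =>
      ncard_count_normalizedFactors_eq_of_mem_finsuppAntidiag (fun h => (hI h).1) hf (hNI ▸ hm),
    Finset.sum_const, Finset.card_finsuppAntidiag_nat_eq_choose, nsmul_eq_mul, ← hNI,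
    Nat.card_eq_fintype_card, hF,
    pow_sub₀ _ hq (by have := Nat.mul_le_mul_left i (Nat.le_add_left l Ni); omega), pow_mul]
  · ring
  · exact ⟨fun ⟨h₁, h₂, h₃, h₄⟩ => ⟨⟨h₁, h₂, h₃⟩, (hfactors g h₁.ne_zero).symm.trans h₄⟩,
      fun ⟨⟨h₁, h₂, h₃⟩, h₄⟩ => ⟨h₁, h₂, h₃, (hfactors g h₁.ne_zero).trans h₄⟩⟩

/-- If `m ≥ i(N_i + l) + w`, the number of monic polynomials
`x^m + a_1 x^(m-1) + ... + a_w x^(m-w) + g(x)` (with `deg g ≤ m-w-1`) having exactly `l`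
irreducible factors of degree `i` counted with multiplicity equals
`q^(m-w) · C(N_i + l − 1, l) · (1/q^i)^l · (1 − 1/q^i)^(N_i)`. -/
theorem stmt_12 (q : ℕ) (F : Type*) [Field F] [Fintype F] [DecidableEq F] (hF : Fintype.card F = q)
    (i : ℕ) (hi : 1 ≤ i) (Ni : ℕ)
    (hNi : Ni = Nat.card {h : Polynomial F // h.Monic ∧ Irreducible h ∧ h.natDegree = i})
    (w m l : ℕ) (hm : i * (Ni + l) + w ≤ m) (a : Fin w → F) :
    (Nat.card {g : Polynomial F // g.Monic ∧ g.natDegree = m ∧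
        (∀ k : Fin w, g.coeff (m - (k + 1)) = a k) ∧
        Multiset.countP (fun h => h.natDegree = i) (normalizedFactors g) = l} : ℚ) =
      (q : ℚ) ^ (m - w) * ((Ni + l - 1).choose l) * (1 / (q : ℚ) ^ i) ^ l *
        (1 - 1 / (q : ℚ) ^ i) ^ Ni :=
  stmt_12_general q F hF i Ni hNi w m l hm a
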